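/- arXiv:2502.17264 — 3 statements merged into one kernel-verified Lean document; each statement's English description precedes it below -/
import Mathlib

section
/- Let Φ : Z → ℝ^d, data points (zᵢ, sᵢ)ᵢ∈[n] in Z × ℝ, and q̂(z) = Φ(z)ᵀβ̂ a minimizer over W = {Φ(·)ᵀβ : β ∈ ℝ^d} of the average pinball loss with parameter α. Then for any w ∈ W, |(1/n) ∑ᵢ₌₁ⁿ w(zᵢ)(α − 1{sᵢ > q̂(zᵢ)})| ≤ (1/n) ∑ᵢ₌₁ⁿ 1{q̂(zᵢ) = sᵢ} · |w(zᵢ)|. -/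
open Finset

/-- The pinball loss with parameter `α`. -/
noncomputable def pinball (α θ s : ℝ) : ℝ := if θ ≤ s then (1 - α) * (s - θ) else α * (θ - s)

open Classical in
lemma pinball_shift_le (α q s w t : ℝ) (ht : 0 < t)
    (hsmall : q ≠ s → t * |w| < |s - q|) :
    pinball α (q + t * w) s ≤
      pinball α q s + t * (w * (α - if q < s then 1 else 0) + (if q = s then 1 else 0) * |w|) := by
  have habs : -|w| ≤ w ∧ w ≤ |w| := ⟨neg_abs_le w, le_abs_self w⟩
  rcases lt_trichotomy q s with h | h | h
  · have hne : q ≠ s := ne_of_lt h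
    have hs : t * |w| < |s - q| := hsmall hne
    rw [abs_of_pos (by linarith : (0:ℝ) < s - q)] at hs
    have htw : t * w ≤ t * |w| := by nlinarith [habs.2]
    have h1 : q + t * w ≤ s := by nlinarith
    have h2 : q ≤ s := le_of_lt h
    simp only [pinball, if_pos h1, if_pos h2, if_pos h, if_neg hne]
    ring_nf
    nlinarith
  · subst h
    simp only [pinball, if_pos rfl, if_neg (lt_irrefl q), le_refl, if_pos, sub_self, mul_zero,
      add_le_add_iff_left]
    by_cases hw : q + t * w ≤ q
    · rw [if_pos hw]
      have : t * w ≤ 0 := by linarith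
      nlinarith [habs.1, habs.2, abs_nonneg w]
    · rw [if_neg hw]
      push_neg at hw
      nlinarith [habs.2, abs_nonneg w]
  · have hne : q ≠ s := ne_of_gt h
    have hs : t * |w| < |s - q| := hsmall hne
    rw [abs_of_neg (by linarith : s - q < 0)] at hs
    have htw : -(t * |w|) ≤ t * w := by nlinarith [habs.1]
    have h1 : ¬ (q + t * w ≤ s) := by push_neg; nlinarith
    have h2 : ¬ (q ≤ s) := not_le_of_gt h
    simp only [pinball, if_neg h1, if_neg h2, if_neg (asymm h), if_neg hne]
    ring_nf
    nlinarith

open Classical in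
lemma oneside {n : ℕ} (α : ℝ) (q s w : Fin n → ℝ) (t : ℝ) (ht : 0 < t)
    (hsmall : ∀ i, q i ≠ s i → t * |w i| < |s i - q i|)
    (hm : ∑ i, pinball α (q i) (s i) ≤ ∑ i, pinball α (q i + t * w i) (s i)) :
    0 ≤ ∑ i, (w i * (α - if q i < s i then 1 else 0) + (if q i = s i then 1 else 0) * |w i|) := by
  have h1 : ∑ i, pinball α (q i + t * w i) (s i) ≤
      ∑ i, pinball α (q i) (s i) +
        t * ∑ i, (w i * (α - if q i < s i then 1 else 0) + (if q i = s i then 1 else 0) * |w i|) := by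
    rw [Finset.mul_sum, ← Finset.sum_add_distrib]
    exact Finset.sum_le_sum fun i _ => pinball_shift_le α (q i) (s i) (w i) t ht (hsmall i)
  have h2 : 0 ≤ t * ∑ i, (w i * (α - if q i < s i then 1 else 0) + (if q i = s i then 1 else 0) * |w i|) := by
    linarith
  exact nonneg_of_mul_nonneg_right h2 ht

open Classical in
/-- For a minimizer `q̂ = Φ(·)ᵀβ̂` of the average pinball loss and any `w = Φ(·)ᵀβ`,
the empirical weighted coverage residual is bounded by the weighted count of ties. -/
theorem stmt6 {Z : Type*} {n d : ℕ} (α : ℝ) (hα : α ∈ Set.Ioo (0 : ℝ) 1)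
    (Φ : Z → Fin d → ℝ) (z : Fin n → Z) (s : Fin n → ℝ) (βh : Fin d → ℝ)
    (hmin : ∀ β : Fin d → ℝ,
      (1 / n : ℝ) * ∑ i, pinball α (∑ j, Φ (z i) j * βh j) (s i) ≤
      (1 / n : ℝ) * ∑ i, pinball α (∑ j, Φ (z i) j * β j) (s i))
    (β : Fin d → ℝ) :
    |(1 / n : ℝ) * ∑ i, (∑ j, Φ (z i) j * β j) *
        (α - if (∑ j, Φ (z i) j * βh j) < s i then 1 else 0)| ≤
    (1 / n : ℝ) * ∑ i, (if (∑ j, Φ (z i) j * βh j) = s i then 1 else 0) *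
        |∑ j, Φ (z i) j * β j| := by
  rcases Nat.eq_zero_or_pos n with hn | hn
  · subst hn; simp
  set q : Fin n → ℝ := fun i => ∑ j, Φ (z i) j * βh j with hqdef
  set w : Fin n → ℝ := fun i => ∑ j, Φ (z i) j * β j with hwdef
  have hnpos : (0:ℝ) < 1 / n := by positivity
  -- choose the step size t
  set m : Fin n → ℝ := fun i => if q i = s i ∨ w i = 0 then 1 else |s i - q i| / (2 * |w i|) with hmdef
  have hne : (Finset.univ : Finset (Fin n)).Nonempty := ⟨⟨0, hn⟩, mem_univ _⟩
  set t : ℝ := Finset.univ.inf' hne m with htdef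
  have ht : 0 < t := by
    rw [htdef, Finset.lt_inf'_iff]
    intro i _
    rw [hmdef]
    dsimp only
    split_ifs with h
    · norm_num
    · push_neg at h
      have h1 : 0 < |s i - q i| := abs_pos.mpr (sub_ne_zero.mpr (Ne.symm h.1))
      have h2 : 0 < |w i| := abs_pos.mpr h.2
      positivity
  have hsmall : ∀ i, q i ≠ s i → t * |w i| < |s i - q i| := by
    intro i hqs
    have h1 : 0 < |s i - q i| := abs_pos.mpr (sub_ne_zero.mpr (Ne.symm hqs))
    by_cases hw : w i = 0
    · rw [hw]; simpa using h1
    · have h2 : 0 < |w i| := abs_pos.mpr hw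
      have hle : t ≤ m i := Finset.inf'_le m (mem_univ i)
      rw [hmdef] at hle
      simp only [hqs, hw, or_self, if_false] at hle
      have : t * (2 * |w i|) ≤ |s i - q i| := (le_div_iff₀ (by positivity)).mp hle
      nlinarith
  have hplus : ∑ i, pinball α (q i) (s i) ≤ ∑ i, pinball α (q i + t * w i) (s i) := by
    have := hmin (fun j => βh j + t * β j)
    have hrw : ∀ i, (∑ j, Φ (z i) j * (βh j + t * β j)) = q i + t * w i := by
      intro i
      rw [hqdef, hwdef]
      dsimp only
      rw [Finset.mul_sum, ← Finset.sum_add_distrib]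
      exact Finset.sum_congr rfl fun j _ => by ring
    simp only [hrw] at this
    exact le_of_mul_le_mul_left this hnpos
  have hminus : ∑ i, pinball α (q i) (s i) ≤ ∑ i, pinball α (q i + t * (-w i)) (s i) := by
    have := hmin (fun j => βh j - t * β j)
    have hrw : ∀ i, (∑ j, Φ (z i) j * (βh j - t * β j)) = q i + t * (-w i) := by
      intro i
      rw [hqdef, hwdef]
      dsimp only
      rw [mul_neg, Finset.mul_sum, ← Finset.sum_neg_distrib, ← Finset.sum_add_distrib]
      exact Finset.sum_congr rfl fun j _ => by ring
    simp only [hrw] at this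
    exact le_of_mul_le_mul_left this hnpos
  have h1 := oneside α q s w t ht hsmall hplus
  have h2 := oneside α q s (fun i => -w i) t ht (by intro i h; simpa using hsmall i h) hminus
  simp only [abs_neg] at h2
  set A : ℝ := ∑ i, w i * (α - if q i < s i then 1 else 0) with hA
  set B : ℝ := ∑ i, (if q i = s i then 1 else 0) * |w i| with hB
  have hAB1 : 0 ≤ A + B := by rw [hA, hB, ← Finset.sum_add_distrib]; exact h1
  have hAB2 : 0 ≤ -A + B := by
    rw [hA, hB, ← Finset.sum_neg_distrib, ← Finset.sum_add_distrib]
    convert h2 using 2 with i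
    ring
  have habs : |A| ≤ B := abs_le.mpr ⟨by linarith, by linarith⟩
  calc |(1/n : ℝ) * A| = (1/n : ℝ) * |A| := by
        rw [abs_mul, abs_of_pos hnpos]
    _ ≤ (1/n : ℝ) * B := by
        exact mul_le_mul_of_nonneg_left habs (le_of_lt hnpos)
end

section
/- Let S₁, …, S_{d+1} be real-valued random variables that, conditionally on a σ-algebra F, are independent with conditionally continuous (atomless) distributions, and let V be an F-measurable random d-dimensional linear subspace of ℝ^{d+1}. Then ℙ[(S₁, …, S_{d+1}) ∈ V] = 0. -/
open MeasureTheory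

/-- A random vector whose coordinates are, conditionally on a σ-algebra `F`, independent
with continuous (atomless) distributions, almost surely avoids any `F`-measurable
`d`-dimensional linear subspace of `ℝ^{d+1}` (given as `{x | xᵀv = 0}` for an
`F`-measurable unit normal `v`). -/
theorem stmt7 {Ω : Type*} (F : MeasurableSpace Ω) [MeasurableSpace Ω] {μ : Measure Ω} [IsProbabilityMeasure μ]
    {d : ℕ} (hF : F ≤ ‹MeasurableSpace Ω›)
    (S : Fin (d + 1) → Ω → ℝ) (hS : ∀ j, Measurable (S j))
    (v : Fin (d + 1) → Ω → ℝ) (hv : ∀ j, Measurable[F] (v j))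
    (hvunit : ∀ ω, ∑ j, (v j ω) ^ 2 = 1)
    (hcont : ∀ j : Fin (d + 1), ∀ T : Ω → ℝ,
      Measurable[F ⊔ ⨆ k ∈ ({j}ᶜ : Set (Fin (d + 1))),
        MeasurableSpace.comap (S k) inferInstance] T →
      μ {ω | S j ω = T ω} = 0) :
    μ {ω | ∑ j, S j ω * v j ω = 0} = 0 := by
  classical
  set T : Fin (d + 1) → Ω → ℝ := fun j ω =>
    (-(∑ k ∈ Finset.univ.erase j, S k ω * v k ω)) / v j ω with hT
  have hTmeas : ∀ j, Measurable[F ⊔ ⨆ k ∈ ({j}ᶜ : Set (Fin (d + 1))),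
      MeasurableSpace.comap (S k) inferInstance] (T j) := by
    intro j
    set m : MeasurableSpace Ω := F ⊔ ⨆ k ∈ ({j}ᶜ : Set (Fin (d + 1))),
      MeasurableSpace.comap (S k) inferInstance with hm
    have hv' : ∀ k, Measurable[m] (v k) := fun k => (hv k).mono le_sup_left le_rfl
    have hS' : ∀ k ∈ Finset.univ.erase j, Measurable[m] (S k) := by
      intro k hk
      have hk' : k ∈ ({j}ᶜ : Set (Fin (d + 1))) := by
        simpa using (Finset.mem_erase.mp hk).1
      have hle : MeasurableSpace.comap (S k) inferInstance ≤ m := by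
        refine le_trans ?_ le_sup_right
        exact le_iSup₂ (f := fun k (_ : k ∈ ({j}ᶜ : Set (Fin (d + 1)))) =>
          MeasurableSpace.comap (S k) inferInstance) k hk'
      exact Measurable.mono (measurable_iff_comap_le.mpr le_rfl) hle le_rfl
    have hsum : Measurable[m] (fun ω => ∑ k ∈ Finset.univ.erase j, S k ω * v k ω) :=
      Finset.measurable_sum _ fun k hk => (hS' k hk).mul (hv' k)
    exact hsum.neg.div (hv' j)
  have hzero : ∀ j, μ {ω | S j ω = T j ω} = 0 := fun j => hcont j (T j) (hTmeas j)
  have hsub : {ω | ∑ j, S j ω * v j ω = 0} ⊆ ⋃ j, {ω | S j ω = T j ω} := by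
    intro ω hω
    simp only [Set.mem_setOf_eq] at hω
    have hex : ∃ j, v j ω ≠ 0 := by
      by_contra h
      push_neg at h
      have := hvunit ω
      simp only [h, ne_eq, zero_pow, Finset.sum_const_zero] at this
      norm_num at this
    obtain ⟨j, hj⟩ := hex
    refine Set.mem_iUnion.mpr ⟨j, ?_⟩
    simp only [Set.mem_setOf_eq, hT]
    rw [eq_div_iff hj]
    have hsplit : S j ω * v j ω + ∑ k ∈ Finset.univ.erase j, S k ω * v k ω
        = ∑ k, S k ω * v k ω :=
      Finset.add_sum_erase _ (fun k => S k ω * v k ω) (Finset.mem_univ j)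
    rw [hω] at hsplit
    linarith
  exact measure_mono_null hsub (measure_iUnion_null hzero)
end

section
/- Consider the test-time quantile regression: for exchangeable data (zᵢ, Sᵢ)ᵢ∈[n+1] with values in Z × ℝ, let q̂ ∈ W = {Φ(·)ᵀβ : β ∈ ℝ^d} minimize (1/(n+1)) ∑ᵢ₌₁^{n+1} ℓ_α(w(zᵢ), Sᵢ) over w ∈ W. If conditionally on (Φ(z₁),…,Φ(z_{n+1})) the scores Sᵢ are independent with continuous distributions, then for any w ∈ W: |E[w(z_{n+1})(α − 1{S_{n+1} > q̂(z_{n+1})})]| ≤ (d/(n+1)) · E[max_{i ∈ [n+1]} |w(zᵢ)|]. -/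
/-!
Perturbing `q̂` in a direction `w ∈ W` cannot decrease the empirical pinball loss, and the
one-sided derivative of that loss is `∑ᵢ w(zᵢ)(α − 1{Sᵢ > q̂(zᵢ)})` up to the terms with
`q̂(zᵢ) = Sᵢ`; so this sum is at most `∑_{q̂(zᵢ) = Sᵢ} |w(zᵢ)|` in absolute value. More than `d`
interpolated points would force some `Φ(z_{i₀})` into the span of linearly independent
`Φ(z_k)`, `k ∈ B ∌ i₀`, and then `S_{i₀}` would be a measurable function of the `Φ(z_k)` and of
the `S_k`, `k ∈ B`, an event of probability zero by conditional continuity. Hence almost surely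
the sum is at most `d · maxᵢ |w(zᵢ)|`, and by exchangeability its expectation is `n + 1` times
the left-hand side.
-/

open MeasureTheory Finset

open Filter Topology Matrix

section Pinball

theorem pinball_add_mul_le (α q s w : ℝ) :
    ∀ᶠ t in 𝓝[>] 0, pinball α (q + t * w) s ≤
      pinball α q s + t * (w * (α - if q < s then 1 else 0) + if q = s then |w| else 0) := by
  have hlim : Tendsto (fun t : ℝ => q + t * w) (𝓝[>] 0) (𝓝 q) :=
    tendsto_nhdsWithin_of_tendsto_nhds (Continuous.tendsto' (by fun_prop) 0 q (by simp))
  rcases lt_trichotomy q s with h | rfl | h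
  · filter_upwards [hlim.eventually (gt_mem_nhds h)] with t ht
    simp only [pinball, ht.le, ↓reduceIte, h.le, h, h.ne, add_zero]
    linarith
  · filter_upwards [self_mem_nhdsWithin] with t (ht : 0 < t)
    simp only [pinball, lt_irrefl, if_true, le_refl, if_false]
    split_ifs
    · nlinarith [neg_abs_le w]
    · nlinarith [le_abs_self w]
  · filter_upwards [hlim.eventually (lt_mem_nhds h)] with t ht
    simp only [pinball, ht.not_ge, ↓reduceIte, h.not_ge, h.not_gt, sub_zero, h.ne', add_zero]
    linarith

variable {ι : Type*} [Fintype ι]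

theorem sum_pinball_slope_nonneg (α : ℝ) (q s w : ι → ℝ)
    (hmin : ∀ t : ℝ, ∑ i, pinball α (q i) (s i) ≤ ∑ i, pinball α (q i + t * w i) (s i)) :
    0 ≤ ∑ i, (w i * (α - if q i < s i then 1 else 0) + if q i = s i then |w i| else 0) := by
  obtain ⟨t, hle, ht⟩ := ((eventually_all.2 fun i => pinball_add_mul_le α (q i) (s i) (w i)).and
    self_mem_nhdsWithin).exists
  refine nonneg_of_mul_nonneg_right ?_ (show (0 : ℝ) < t from ht)
  have := Finset.sum_le_sum fun i (_ : i ∈ Finset.univ) => hle i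
  rw [Finset.sum_add_distrib, ← Finset.mul_sum] at this
  linarith [hmin t]

theorem abs_sum_pinball_slope_le (α : ℝ) (q s w : ι → ℝ)
    (hmin : ∀ t : ℝ, ∑ i, pinball α (q i) (s i) ≤ ∑ i, pinball α (q i + t * w i) (s i)) :
    |∑ i, w i * (α - if q i < s i then 1 else 0)| ≤ ∑ i with q i = s i, |w i| := by
  have hpos := sum_pinball_slope_nonneg α q s w hmin
  have hneg := sum_pinball_slope_nonneg α q s (-w) fun t => by
    simpa [mul_neg, neg_mul] using hmin (-t)
  simp only [Finset.sum_add_distrib, Pi.neg_apply, abs_neg, neg_mul, Finset.sum_neg_distrib]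
    at hpos hneg
  rw [Finset.sum_ite, Finset.sum_const_zero, add_zero] at hpos hneg
  exact abs_le.2 ⟨by linarith, by linarith⟩

theorem abs_sum_linear_pinball_residual_le {κ : Type*} [Fintype κ] (α : ℝ) (x : ι → κ → ℝ)
    (s : ι → ℝ) {β₀ : κ → ℝ}
    (hmin : ∀ β, ∑ i, pinball α (x i ⬝ᵥ β₀) (s i) ≤ ∑ i, pinball α (x i ⬝ᵥ β) (s i))
    (β : κ → ℝ) :
    |∑ i, (x i ⬝ᵥ β) * (α - if x i ⬝ᵥ β₀ < s i then 1 else 0)| ≤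
      ∑ i with x i ⬝ᵥ β₀ = s i, |x i ⬝ᵥ β| :=
  abs_sum_pinball_slope_le α _ s _ fun t => by
    simpa [dotProduct_add, dotProduct_smul] using hmin (β₀ + t • β)

end Pinball

section Extrapolation

variable {m n : Type*} [Fintype m] [Fintype n] [DecidableEq m]

theorem Matrix.isUnit_mul_transpose_of_linearIndependent_rows {U : Matrix m n ℝ}
    (hU : LinearIndependent ℝ U.row) : IsUnit (U * Uᵀ) := by
  rw [← vecMul_injective_iff_isUnit, ← coe_vecMulLinear, ← LinearMap.ker_eq_bot,
    LinearMap.ker_eq_bot']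
  intro c hc
  rw [← vecMul_injective_iff] at hU
  have : c ᵥ* U = 0 := by
    simpa [conjTranspose_eq_transpose_of_trivial] using
      (vecMul_self_mul_conjTranspose_eq_zero U c).1 hc
  exact hU (this.trans (zero_vecMul U).symm)

/-- For `v = c ᵥ* U` with `U` of independent rows, this is `c ⬝ᵥ t`: the Gram matrix `U * Uᵀ`
recovers `c` from `v` by a formula that is measurable in `(U, v)`. -/
noncomputable def extrapolate (U : Matrix m n ℝ) (v : n → ℝ) (t : m → ℝ) : ℝ :=
  ((U * Uᵀ)⁻¹ *ᵥ (U *ᵥ v)) ⬝ᵥ t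

theorem extrapolate_vecMul_mulVec {U : Matrix m n ℝ} (hU : LinearIndependent ℝ U.row)
    (c : m → ℝ) (b : n → ℝ) : extrapolate U (c ᵥ* U) (U *ᵥ b) = c ᵥ* U ⬝ᵥ b := by
  have hc : (U * Uᵀ)⁻¹ *ᵥ (U *ᵥ (c ᵥ* U)) = c := by
    rw [← mulVec_transpose, mulVec_mulVec, mulVec_mulVec, Matrix.mul_assoc,
      nonsing_inv_mul _ ((isUnit_mul_transpose_of_linearIndependent_rows hU).map detMonoidHom),
      one_mulVec]
  rw [extrapolate, hc, dotProduct_mulVec]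

theorem extrapolate_eq_inv_det_mul (U : Matrix m n ℝ) (v : n → ℝ) (t : m → ℝ) :
    extrapolate U v t = (U * Uᵀ).det⁻¹ * ((adjugate (U * Uᵀ) *ᵥ (U *ᵥ v)) ⬝ᵥ t) := by
  rw [extrapolate, Matrix.inv_def, Ring.inverse_eq_inv', smul_mulVec, smul_dotProduct,
    smul_eq_mul]

theorem measurable_extrapolate {X : Type*} {mX : MeasurableSpace X} {U : X → Matrix m n ℝ}
    {v : X → n → ℝ} {t : X → m → ℝ} (hU : ∀ i j, Measurable fun x => U x i j)
    (hv : Measurable v) (ht : ∀ i, Measurable fun x => t x i) :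
    Measurable fun x => extrapolate (U x) (v x) (t x) := by
  simp only [extrapolate_eq_inv_det_mul]
  replace ht : Measurable t := measurable_pi_lambda _ ht
  replace hU : Measurable fun x i j => U x i j :=
    measurable_pi_lambda _ fun i => measurable_pi_lambda _ (hU i)
  have hgram : Continuous fun P : m → n → ℝ => of P * (of P)ᵀ :=
    continuous_id.matrix_mul continuous_id.matrix_transpose
  have hadj : Continuous fun p : (m → n → ℝ) × (n → ℝ) × (m → ℝ) =>
      (adjugate (of p.1 * (of p.1)ᵀ) *ᵥ (of p.1 *ᵥ p.2.1)) ⬝ᵥ p.2.2 :=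
    ((hgram.comp continuous_fst).matrix_adjugate.matrix_mulVec
      (continuous_fst.matrix_mulVec continuous_snd.fst)).dotProduct continuous_snd.snd
  have hdet : Measurable fun x => (U x * (U x)ᵀ).det := hgram.matrix_det.measurable.comp hU
  have hdata : Measurable fun x => ((fun i j => U x i j : m → n → ℝ), v x, t x) :=
    hU.prodMk (hv.prodMk ht)
  have hrest := hadj.measurable.comp hdata
  exact hdet.inv.mul hrest

theorem exists_eq_extrapolate_of_card_lt {ι κ : Type*} [DecidableEq ι] [Fintype κ]
    {u : ι → κ → ℝ} {s : ι → ℝ} {b : κ → ℝ} {A : Finset ι} (hA : Fintype.card κ < #A)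
    (hs : ∀ i ∈ A, u i ⬝ᵥ b = s i) :
    ∃ i ∈ A, ∃ B : Finset ι, i ∉ B ∧
      s i = extrapolate (of fun k : B => u k) (u i) fun k => s k := by
  obtain ⟨B, hBA, -, hspan, hind⟩ :=
    exists_linearIndepOn_extension (linearIndepOn_empty ℝ u) (Set.empty_subset (A : Set ι))
  lift B to Finset ι using A.finite_toSet.subset hBA
  have hcard : #B ≤ Fintype.card κ := by simpa using hind.fintype_card_le_finrank
  obtain ⟨i, hiA, hiB⟩ := Finset.exists_mem_notMem_of_card_lt_card (hcard.trans_lt hA)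
  set U : Matrix B κ ℝ := of fun k => u k
  obtain ⟨c, hc⟩ : u i ∈ LinearMap.range U.vecMulLinear := by
    have := hspan ⟨i, hiA, rfl⟩
    rw [Set.image_eq_range] at this
    rwa [range_vecMulLinear]
  replace hc : c ᵥ* U = u i := hc
  have hsB : (fun k : B => s k) = U *ᵥ b := funext fun k => (hs k (hBA k.2)).symm
  refine ⟨i, hiA, B, hiB, ?_⟩
  calc s i = c ᵥ* U ⬝ᵥ b := by rw [hc, hs i hiA]
    _ = extrapolate U (c ᵥ* U) (U *ᵥ b) := (extrapolate_vecMul_mulVec hind c b).symm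
    _ = _ := by rw [hc, hsB]

end Extrapolation

section Probability

variable {Ω ι : Type*} [MeasurableSpace Ω] {μ : Measure Ω}

theorem ae_card_interpolated_le [Fintype ι] [DecidableEq ι] {κ : Type*} [Fintype κ]
    {u : ι → Ω → κ → ℝ} {s : ι → Ω → ℝ} (b : Ω → κ → ℝ)
    (hnull : ∀ i (B : Finset ι), i ∉ B →
      μ {ω | s i ω = extrapolate (of fun k : B => u k ω) (u i ω) fun k => s k ω} = 0) :
    ∀ᵐ ω ∂μ, #{i | u i ω ⬝ᵥ b ω = s i ω} ≤ Fintype.card κ := by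
  have hne : ∀ᵐ ω ∂μ, ∀ i (B : Finset ι), i ∉ B →
      s i ω ≠ extrapolate (of fun k : B => u k ω) (u i ω) fun k => s k ω :=
    eventually_all.2 fun i => eventually_all.2 fun B => eventually_imp_distrib_left.2 fun hiB =>
      measure_eq_zero_iff_ae_notMem.1 (hnull i B hiB)
  filter_upwards [hne] with ω hω
  by_contra! hlt
  obtain ⟨i, -, B, hiB, heq⟩ := exists_eq_extrapolate_of_card_lt hlt fun i hi => by
    simpa using hi
  exact hω i B hiB heq

theorem integral_eq_of_exchangeable [DecidableEq ι] {E : Type*} [MeasurableSpace E]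
    {X : Ω → ι → E} (hX : Measurable X)
    (hexch : ∀ π : Equiv.Perm ι, μ.map (fun ω => X ω ∘ π) = μ.map X)
    {g : (ι → E) → ι → ℝ} (hg : ∀ i, Measurable fun x => g x i)
    (hequiv : ∀ (π : Equiv.Perm ι) x i, g (x ∘ π) i = g x (π i)) (i j : ι) :
    ∫ ω, g (X ω) i ∂μ = ∫ ω, g (X ω) j ∂μ := by
  have hident : ProbabilityTheory.IdentDistrib (fun ω => X ω ∘ Equiv.swap i j) X μ μ :=
    ⟨(measurable_pi_lambda _ fun k => (measurable_pi_apply _).comp hX).aemeasurable,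
      hX.aemeasurable, hexch _⟩
  simpa [hequiv] using (hident.comp (hg j)).integral_eq

theorem abs_integral_le_of_abs_sum_le [Fintype ι] {G : ι → Ω → ℝ} {M : Ω → ℝ} {c : ℝ} (i₀ : ι)
    (hG : ∀ i, Integrable (G i) μ) (hsymm : ∀ i, ∫ ω, G i ω ∂μ = ∫ ω, G i₀ ω ∂μ)
    (hM : Integrable M μ) (hbound : ∀ᵐ ω ∂μ, |∑ i, G i ω| ≤ c * M ω) :
    |∫ ω, G i₀ ω ∂μ| ≤ c / Fintype.card ι * ∫ ω, M ω ∂μ := by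
  have hcard : (0 : ℝ) < Fintype.card ι := Nat.cast_pos.2 (Fintype.card_pos_iff.2 ⟨i₀⟩)
  have hsum : ∫ ω, ∑ i, G i ω ∂μ = Fintype.card ι * ∫ ω, G i₀ ω ∂μ := by
    rw [integral_finsetSum _ fun i _ => hG i, Finset.sum_congr rfl fun i _ => hsymm i]
    simp
  have habs : |∫ ω, ∑ i, G i ω ∂μ| ≤ c * ∫ ω, M ω ∂μ := calc
    |∫ ω, ∑ i, G i ω ∂μ| ≤ ∫ ω, |∑ i, G i ω| ∂μ := abs_integral_le_integral_abs
    _ ≤ ∫ ω, c * M ω ∂μ :=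
      integral_mono_ae (integrable_finsetSum _ fun i _ => hG i).abs (hM.const_mul c) hbound
    _ = c * ∫ ω, M ω ∂μ := integral_const_mul c M
  rw [hsum, abs_mul, abs_of_pos hcard] at habs
  rw [div_mul_eq_mul_div, le_div_iff₀ hcard]
  linarith

end Probability

section Residual

variable {Z ι κ : Type*} [Fintype κ]

noncomputable def weightedResidual (α : ℝ) (Φ : Z → κ → ℝ) (Q : (ι → Z × ℝ) → κ → ℝ)
    (β : κ → ℝ) (data : ι → Z × ℝ) (i : ι) : ℝ :=
  (Φ (data i).1 ⬝ᵥ β) * (α - if Φ (data i).1 ⬝ᵥ Q data < (data i).2 then 1 else 0)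

theorem abs_weightedResidual_le {α : ℝ} (hα : α ∈ Set.Icc (0 : ℝ) 1) (Φ : Z → κ → ℝ)
    (Q : (ι → Z × ℝ) → κ → ℝ) (β : κ → ℝ) (data : ι → Z × ℝ) (i : ι) :
    |weightedResidual α Φ Q β data i| ≤ |Φ (data i).1 ⬝ᵥ β| := by
  rw [weightedResidual, abs_mul]
  refine mul_le_of_le_one_right (abs_nonneg _) (abs_le.2 ⟨?_, ?_⟩) <;>
    split_ifs <;> linarith [hα.1, hα.2]

theorem weightedResidual_comp_perm {α : ℝ} {Φ : Z → κ → ℝ} {Q : (ι → Z × ℝ) → κ → ℝ}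
    {β : κ → ℝ} {data : ι → Z × ℝ} {π : Equiv.Perm ι} (hQ : Q (data ∘ π) = Q data) (i : ι) :
    weightedResidual α Φ Q β (data ∘ π) i = weightedResidual α Φ Q β data (π i) := by
  simp only [weightedResidual, hQ, Function.comp_apply]

theorem measurable_weightedResidual [MeasurableSpace Z] {α : ℝ} {Φ : Z → κ → ℝ}
    {Q : (ι → Z × ℝ) → κ → ℝ} (hΦ : Measurable Φ) (hQ : Measurable Q) (β : κ → ℝ) (i : ι) :
    Measurable fun data => weightedResidual α Φ Q β data i := by
  have hx : Measurable fun data : ι → Z × ℝ => Φ (data i).1 :=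
    hΦ.comp (measurable_pi_apply i).fst
  have hdot : ∀ {f : (ι → Z × ℝ) → κ → ℝ}, Measurable f →
      Measurable fun data => Φ (data i).1 ⬝ᵥ f data := fun hf =>
    Finset.measurable_sum _ fun j _ => (measurable_pi_apply j |>.comp hx).mul
      (measurable_pi_apply j |>.comp hf)
  exact (hdot measurable_const).mul (measurable_const.sub (Measurable.ite
    (measurableSet_lt (hdot hQ) (measurable_pi_apply i).snd) measurable_const measurable_const))

end Residual

open Classical in
theorem stmt15_general {Ω Z : Type*} [MeasurableSpace Ω] [MeasurableSpace Z]
    {μ : Measure Ω}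
    {n d : ℕ} (α : ℝ) (hα : α ∈ Set.Ioo (0 : ℝ) 1)
    (Φ : Z → Fin d → ℝ) (z : Fin (n + 1) → Ω → Z) (S : Fin (n + 1) → Ω → ℝ)
    (Q : (Fin (n + 1) → Z × ℝ) → (Fin d → ℝ))
    (hΦ : Measurable Φ) (hz : ∀ i, Measurable (z i)) (hS : ∀ i, Measurable (S i))
    (hQ : Measurable Q)
    (hQsymm : ∀ (π : Equiv.Perm (Fin (n + 1))) (data : Fin (n + 1) → Z × ℝ),
      Q (data ∘ π) = Q data)
    (hmin : ∀ (data : Fin (n + 1) → Z × ℝ) (β : Fin d → ℝ),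
      (1 / (n + 1) : ℝ) * ∑ i, pinball α (∑ j, Φ (data i).1 j * Q data j) (data i).2 ≤
      (1 / (n + 1) : ℝ) * ∑ i, pinball α (∑ j, Φ (data i).1 j * β j) (data i).2)
    (hexch : ∀ π : Equiv.Perm (Fin (n + 1)),
      Measure.map (fun ω => fun i => (z (π i) ω, S (π i) ω)) μ =
      Measure.map (fun ω => fun i => (z i ω, S i ω)) μ)
    (hcont : ∀ i : Fin (n + 1), ∀ T : Ω → ℝ,
      Measurable[(⨆ k : Fin (n + 1),
          MeasurableSpace.comap (fun ω => Φ (z k ω)) inferInstance) ⊔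
        (⨆ k ∈ ({i}ᶜ : Set (Fin (n + 1))),
          MeasurableSpace.comap (S k) inferInstance)] T →
      μ {ω | S i ω = T ω} = 0)
    (β : Fin d → ℝ)
    (hint : Integrable (fun ω =>
      Finset.univ.sup' Finset.univ_nonempty (fun i => |∑ j, Φ (z i ω) j * β j|)) μ) :
    |∫ ω, (∑ j, Φ (z (Fin.last n) ω) j * β j) *
        (α - if (∑ j, Φ (z (Fin.last n) ω) j * Q (fun i => (z i ω, S i ω)) j) <
            S (Fin.last n) ω then 1 else 0) ∂μ| ≤
    (d / (n + 1) : ℝ) * ∫ ω, Finset.univ.sup' Finset.univ_nonempty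
        (fun i => |∑ j, Φ (z i ω) j * β j|) ∂μ := by
  set D : Ω → Fin (n + 1) → Z × ℝ := fun ω i => (z i ω, S i ω)
  set M : Ω → ℝ := fun ω => univ.sup' univ_nonempty fun i => |∑ j, Φ (z i ω) j * β j|
  have hD : Measurable D := measurable_pi_lambda _ fun i => (hz i).prodMk (hS i)
  have hM : ∀ ω i, |Φ (z i ω) ⬝ᵥ β| ≤ M ω := fun ω i =>
    le_sup' (fun i => |∑ j, Φ (z i ω) j * β j|) (mem_univ i)
  set G : Fin (n + 1) → Ω → ℝ := fun i ω => weightedResidual α Φ Q β (D ω) i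
  have hG : ∀ i, Integrable (G i) μ := fun i =>
    hint.mono' ((measurable_weightedResidual hΦ hQ β i).comp hD).aestronglyMeasurable
      (ae_of_all _ fun ω =>
        (abs_weightedResidual_le (Set.Ioo_subset_Icc_self hα) Φ Q β _ i).trans (hM ω i))
  have hsymm : ∀ i, ∫ ω, G i ω ∂μ = ∫ ω, G (Fin.last n) ω ∂μ := fun i =>
    integral_eq_of_exchangeable hD hexch (measurable_weightedResidual hΦ hQ β)
      (fun π data => weightedResidual_comp_perm (hQsymm π data)) i (Fin.last n)
  have hnull : ∀ i (B : Finset (Fin (n + 1))), i ∉ B → μ {ω | S i ω =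
      extrapolate (of fun k : B => Φ (z k ω)) (Φ (z i ω)) fun k => S k ω} = 0 := by
    intro i B hiB
    refine hcont i _ (measurable_extrapolate (fun k j => (measurable_pi_apply j).comp ?_) ?_
      fun k => ?_) <;> rw [measurable_iff_comap_le]
    · exact le_sup_of_le_left (le_iSup_of_le (k : Fin (n + 1)) le_rfl)
    · exact le_sup_of_le_left (le_iSup_of_le i le_rfl)
    · exact le_sup_of_le_right (le_iSup₂_of_le (k : Fin (n + 1)) (fun h => hiB (h ▸ k.2)) le_rfl)
  have hbound : ∀ᵐ ω ∂μ, |∑ i, G i ω| ≤ d * M ω := by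
    filter_upwards [ae_card_interpolated_le (u := fun k ω => Φ (z k ω)) (fun ω => Q (D ω)) hnull]
      with ω hcard
    rw [Fintype.card_fin] at hcard
    calc |∑ i, G i ω| ≤ ∑ i with Φ (z i ω) ⬝ᵥ Q (D ω) = S i ω, |Φ (z i ω) ⬝ᵥ β| :=
          abs_sum_linear_pinball_residual_le α _ _
            (fun β' => (mul_le_mul_iff_right₀ (by positivity)).1 (hmin (D ω) β')) β
      _ ≤ #{i | Φ (z i ω) ⬝ᵥ Q (D ω) = S i ω} • M ω := sum_le_card_nsmul _ _ _ fun i _ => hM ω i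
      _ ≤ d * M ω := by
        rw [nsmul_eq_mul]
        exact mul_le_mul_of_nonneg_right (by exact_mod_cast hcard) ((abs_nonneg _).trans (hM ω 0))
  have h := abs_integral_le_of_abs_sum_le (Fin.last n) hG hsymm hint hbound
  rw [Fintype.card_fin, Nat.cast_succ] at h
  exact h

open Classical in
/-- Test-time quantile regression bound: for exchangeable data `(zᵢ, Sᵢ)` and a
permutation-invariant minimizer `q̂ = Φ(·)ᵀ(Q data)` of the average pinball loss, if the
scores are conditionally independent with continuous distributions given the `Φ(zᵢ)`,
then for any weight `w = Φ(·)ᵀβ`,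
`|E[w(z_{n+1})(α − 1{S_{n+1} > q̂(z_{n+1})})]| ≤ (d/(n+1)) E[maxᵢ |w(zᵢ)|]`. -/
theorem stmt15 {Ω Z : Type*} [MeasurableSpace Ω] [MeasurableSpace Z]
    {μ : Measure Ω} [IsProbabilityMeasure μ]
    {n d : ℕ} (α : ℝ) (hα : α ∈ Set.Ioo (0 : ℝ) 1)
    (Φ : Z → Fin d → ℝ) (z : Fin (n + 1) → Ω → Z) (S : Fin (n + 1) → Ω → ℝ)
    (Q : (Fin (n + 1) → Z × ℝ) → (Fin d → ℝ))
    (hΦ : Measurable Φ) (hz : ∀ i, Measurable (z i)) (hS : ∀ i, Measurable (S i))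
    (hQ : Measurable Q)
    (hQsymm : ∀ (π : Equiv.Perm (Fin (n + 1))) (data : Fin (n + 1) → Z × ℝ),
      Q (data ∘ π) = Q data)
    (hmin : ∀ (data : Fin (n + 1) → Z × ℝ) (β : Fin d → ℝ),
      (1 / (n + 1) : ℝ) * ∑ i, pinball α (∑ j, Φ (data i).1 j * Q data j) (data i).2 ≤
      (1 / (n + 1) : ℝ) * ∑ i, pinball α (∑ j, Φ (data i).1 j * β j) (data i).2)
    (hexch : ∀ π : Equiv.Perm (Fin (n + 1)),
      Measure.map (fun ω => fun i => (z (π i) ω, S (π i) ω)) μ =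
      Measure.map (fun ω => fun i => (z i ω, S i ω)) μ)
    (hcont : ∀ i : Fin (n + 1), ∀ T : Ω → ℝ,
      Measurable[(⨆ k : Fin (n + 1),
          MeasurableSpace.comap (fun ω => Φ (z k ω)) inferInstance) ⊔
        (⨆ k ∈ ({i}ᶜ : Set (Fin (n + 1))),
          MeasurableSpace.comap (S k) inferInstance)] T →
      μ {ω | S i ω = T ω} = 0)
    (β : Fin d → ℝ)
    (hint : Integrable (fun ω =>
      Finset.univ.sup' Finset.univ_nonempty (fun i => |∑ j, Φ (z i ω) j * β j|)) μ) :
    |∫ ω, (∑ j, Φ (z (Fin.last n) ω) j * β j) *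
        (α - if (∑ j, Φ (z (Fin.last n) ω) j * Q (fun i => (z i ω, S i ω)) j) <
            S (Fin.last n) ω then 1 else 0) ∂μ| ≤
    (d / (n + 1) : ℝ) * ∫ ω, Finset.univ.sup' Finset.univ_nonempty
        (fun i => |∑ j, Φ (z i ω) j * β j|) ∂μ :=
  stmt15_general α hα Φ z S Q hΦ hz hS hQ hQsymm hmin hexch hcont β hint
end
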